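/- arXiv:cs/0602037 — 4 statements merged into one kernel-verified Lean document; each statement's English description precedes it below -/
import Mathlib

section
/- The iterated construction is symmetric: for all natural numbers k and l, (C_l)_k = (C_k)_l, where for X ∈ Mat_{r×s}(R), X_m := ∑_{i=0}^{m-1} A^{m-1-i} X B^i and C_m := (C)_m. -/
theorem iterated_map_symm {R : Type*} [CommRing R] {r s : ℕ}
    (A : Matrix (Fin r) (Fin r) R) (B : Matrix (Fin s) (Fin s) R)
    (C : Matrix (Fin r) (Fin s) R)
    (f : ℕ → Matrix (Fin r) (Fin s) R → Matrix (Fin r) (Fin s) R)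
    (hf : ∀ m X, f m X = ∑ i ∈ Finset.range m, A ^ (m - 1 - i) * X * B ^ i)
    (k l : ℕ) :
    f k (f l C) = f l (f k C) := by
  have key : ∀ a b c d : ℕ, A ^ a * (A ^ b * C * B ^ c) * B ^ d
      = A ^ (a + b) * C * B ^ (c + d) := by
    intro a b c d
    rw [pow_add, pow_add]
    simp [Matrix.mul_assoc]
  rw [hf, hf, hf, hf]
  simp only [Matrix.mul_sum, Matrix.sum_mul]
  rw [Finset.sum_comm]
  refine Finset.sum_congr rfl fun i hi => Finset.sum_congr rfl fun j hj => ?_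
  rw [key, key, add_comm (k - 1 - j) (l - 1 - i), add_comm i j]
end

section
/- The Diffie-Hellman shared key is well defined: (Π_l)_k = (Π_k)_l for all k, l ∈ ℕ, where Π_m := ∑_{i=0}^{m-1} A^{m-1-i} • Π • B^i with A, B integer matrices acting on a matrix Π of elements of an abelian group. -/
/-- Left action of an integer matrix on a matrix of elements of an abelian group. -/
def actL {r s : ℕ} {E : Type*} [AddCommGroup E]
    (A : Matrix (Fin r) (Fin r) ℤ) (Φ : Matrix (Fin r) (Fin s) E) :
    Matrix (Fin r) (Fin s) E :=
  Matrix.of fun i j => ∑ k, A i k • Φ k j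

/-- Right action of an integer matrix on a matrix of elements of an abelian group. -/
def actR {r s : ℕ} {E : Type*} [AddCommGroup E]
    (Φ : Matrix (Fin r) (Fin s) E) (B : Matrix (Fin s) (Fin s) ℤ) :
    Matrix (Fin r) (Fin s) E :=
  Matrix.of fun i j => ∑ k, B k j • Φ i k

/-- The sequence Φ_m built from a matrix of group elements. -/
def PiSeq {r s : ℕ} {E : Type*} [AddCommGroup E]
    (A : Matrix (Fin r) (Fin r) ℤ) (B : Matrix (Fin s) (Fin s) ℤ)
    (Φ : Matrix (Fin r) (Fin s) E) (m : ℕ) : Matrix (Fin r) (Fin s) E :=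
  ∑ t ∈ Finset.range m, actL (A ^ (m - 1 - t)) (actR Φ (B ^ t))

section aux
variable {r s : ℕ} {E : Type*} [AddCommGroup E]

lemma actL_sum {ι : Type*} (A : Matrix (Fin r) (Fin r) ℤ) (t : Finset ι)
    (f : ι → Matrix (Fin r) (Fin s) E) :
    actL A (∑ x ∈ t, f x) = ∑ x ∈ t, actL A (f x) := by
  ext i j
  simp [actL, Matrix.sum_apply, Finset.smul_sum]
  rw [Finset.sum_comm]

lemma actR_sum {ι : Type*} (B : Matrix (Fin s) (Fin s) ℤ) (t : Finset ι)
    (f : ι → Matrix (Fin r) (Fin s) E) :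
    actR (∑ x ∈ t, f x) B = ∑ x ∈ t, actR (f x) B := by
  ext i j
  simp [actR, Matrix.sum_apply, Finset.smul_sum]
  rw [Finset.sum_comm]

lemma actL_mul (A A' : Matrix (Fin r) (Fin r) ℤ) (Φ : Matrix (Fin r) (Fin s) E) :
    actL (A * A') Φ = actL A (actL A' Φ) := by
  ext i j
  simp [actL, Matrix.mul_apply, Finset.sum_smul, Finset.smul_sum, mul_smul]
  rw [Finset.sum_comm]

lemma actR_mul (B B' : Matrix (Fin s) (Fin s) ℤ) (Φ : Matrix (Fin r) (Fin s) E) :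
    actR Φ (B * B') = actR (actR Φ B) B' := by
  ext i j
  simp [actR, Matrix.mul_apply, Finset.sum_smul, Finset.smul_sum, mul_smul]
  rw [Finset.sum_comm]
  exact Finset.sum_congr rfl fun a _ => Finset.sum_congr rfl fun b _ => smul_comm _ _ _

lemma actL_actR (A : Matrix (Fin r) (Fin r) ℤ) (B : Matrix (Fin s) (Fin s) ℤ)
    (Φ : Matrix (Fin r) (Fin s) E) :
    actL A (actR Φ B) = actR (actL A Φ) B := by
  ext i j
  simp [actL, actR, Finset.smul_sum]
  rw [Finset.sum_comm]
  exact Finset.sum_congr rfl fun a _ => Finset.sum_congr rfl fun b _ => smul_comm _ _ _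

end aux

theorem shared_key_well_defined {r s : ℕ} {E : Type*} [AddCommGroup E]
    (A : Matrix (Fin r) (Fin r) ℤ) (B : Matrix (Fin s) (Fin s) ℤ)
    (Pi_ : Matrix (Fin r) (Fin s) E) (k l : ℕ) :
    PiSeq A B (PiSeq A B Pi_ l) k = PiSeq A B (PiSeq A B Pi_ k) l := by
  have key : ∀ (m n : ℕ), PiSeq A B (PiSeq A B Pi_ n) m =
      ∑ t ∈ Finset.range m, ∑ u ∈ Finset.range n,
        actL (A ^ ((m - 1 - t) + (n - 1 - u))) (actR Pi_ (B ^ (t + u))) := by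
    intro m n
    unfold PiSeq
    refine Finset.sum_congr rfl fun t _ => ?_
    rw [actR_sum, actL_sum]
    refine Finset.sum_congr rfl fun u _ => ?_
    rw [← actL_actR, ← actL_mul, ← pow_add, ← actR_mul, ← pow_add, add_comm u t]
  rw [key, key, Finset.sum_comm]
  refine Finset.sum_congr rfl fun t _ => Finset.sum_congr rfl fun u _ => ?_
  rw [add_comm (k - 1 - u) (l - 1 - t), add_comm u t]
end

section
/- Existence of a solution to the linear system: for every k ∈ ℕ there exist a_1, …, a_{r+s-1} ∈ R such that C_k = a_1 C_1 + ⋯ + a_{r+s-1} C_{r+s-1}, where C_m := ∑_{i=0}^{m-1} A^{m-1-i} C B^i. -/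
/-!
By Cayley–Hamilton, reducing `X ^ k` modulo `χ_M` writes `M ^ k` as an `R`-combination of
`1, M, …, M ^ (r + s - 1)`. Taking upper-right blocks is `R`-linear, and the block of `1` vanishes.
-/

open Polynomial Matrix

namespace Matrix

variable {l m n o R : Type*} [CommRing R]

theorem exists_pow_eq_sum_range_card [Fintype n] [DecidableEq n] (M : Matrix n n R) (k : ℕ) :
    ∃ c : ℕ → R, M ^ k = ∑ i ∈ Finset.range (Fintype.card n), c i • M ^ i := by
  rcases isEmpty_or_nonempty n with _ | _
  · exact ⟨0, Subsingleton.elim _ _⟩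
  rcases subsingleton_or_nontrivial R with _ | _
  · exact ⟨0, Subsingleton.elim _ _⟩
  have hχ : M.charpoly ≠ 1 := fun h =>
    Fintype.card_ne_zero (α := n) (by simpa [h] using M.charpoly_natDegree_eq_dim.symm)
  refine ⟨(X ^ k %ₘ M.charpoly).coeff, ?_⟩
  rw [pow_eq_aeval_mod_charpoly, aeval_eq_sum_range', ← M.charpoly_natDegree_eq_dim]
  exact natDegree_modByMonic_lt _ M.charpoly_monic hχ

@[simps]
def toBlocks₁₂LinearMap : Matrix (n ⊕ o) (l ⊕ m) R →ₗ[R] Matrix n m R where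
  toFun := toBlocks₁₂
  map_add' _ _ := rfl
  map_smul' _ _ := rfl

theorem toBlocks₁₂_one [DecidableEq n] [DecidableEq o] :
    (1 : Matrix (n ⊕ o) (n ⊕ o) R).toBlocks₁₂ = 0 :=
  toBlocks₁₂_diagonal _

end Matrix

theorem linear_system_has_solution {R : Type*} [CommRing R] {r s : ℕ}
    (A : Matrix (Fin r) (Fin r) R) (B : Matrix (Fin s) (Fin s) R)
    (C : Matrix (Fin r) (Fin s) R) (k : ℕ) :
    ∃ a : ℕ → R,
      ((Matrix.fromBlocks A C 0 B) ^ k).toBlocks₁₂ =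
        ∑ i ∈ Finset.Icc 1 (r + s - 1),
          a i • ((Matrix.fromBlocks A C 0 B) ^ i).toBlocks₁₂ := by
  obtain ⟨a, ha⟩ := (fromBlocks A C 0 B).exists_pow_eq_sum_range_card k
  refine ⟨a, ?_⟩
  have hC₀ : a 0 • ((fromBlocks A C 0 B) ^ 0).toBlocks₁₂ = 0 := by
    rw [pow_zero, toBlocks₁₂_one, smul_zero]
  rw [← toBlocks₁₂LinearMap_apply, ha, Fintype.card_sum, Fintype.card_fin, Fintype.card_fin]
  simp only [map_sum, map_smul, toBlocks₁₂LinearMap_apply]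
  refine (Finset.sum_subset (fun i hi => ?_) fun i hi hi' => ?_).symm
  · simp only [Finset.mem_Icc, Finset.mem_range] at hi ⊢
    omega
  · obtain rfl : i = 0 := by
      simp only [Finset.mem_Icc, Finset.mem_range] at hi hi'
      omega
    exact hC₀
end

section
/- Main proposition: suppose a_1, …, a_{r+s-1} ∈ R satisfy C_k = ∑_{i=1}^{r+s-1} a_i C_i. Then for all l ∈ ℕ, (C_l)_k = ∑_{i=1}^{r+s-1} a_i (C_l)_i, where X_m := ∑_{j=0}^{m-1} A^{m-1-j} X B^j for X ∈ Mat_{r×s}(R) and C_m := (C)_m. -/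
theorem main_proposition {R : Type*} [CommRing R] {r s : ℕ}
    (A : Matrix (Fin r) (Fin r) R) (B : Matrix (Fin s) (Fin s) R)
    (C : Matrix (Fin r) (Fin s) R) (k : ℕ) (a : ℕ → R)
    (f : ℕ → Matrix (Fin r) (Fin s) R → Matrix (Fin r) (Fin s) R)
    (hf : ∀ m X, f m X = ∑ j ∈ Finset.range m, A ^ (m - 1 - j) * X * B ^ j)
    (h : f k C = ∑ i ∈ Finset.Icc 1 (r + s - 1), a i • f i C) :
    ∀ l : ℕ, f k (f l C) = ∑ i ∈ Finset.Icc 1 (r + s - 1), a i • f i (f l C) := by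
  have comm : ∀ m l (X : Matrix (Fin r) (Fin s) R), f m (f l X) = f l (f m X) := by
    intro m l X
    simp only [hf, Matrix.mul_sum, Matrix.sum_mul, Matrix.mul_assoc, ← pow_add]
    rw [Finset.sum_comm]
    apply Finset.sum_congr rfl
    intro i _
    apply Finset.sum_congr rfl
    intro j _
    simp only [← Matrix.mul_assoc, ← pow_add]
    rw [add_comm (l - 1 - i), add_comm j i]
  have lin : ∀ l, f l (∑ i ∈ Finset.Icc 1 (r + s - 1), a i • f i C)
      = ∑ i ∈ Finset.Icc 1 (r + s - 1), a i • f l (f i C) := by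
    intro l
    simp only [hf, Matrix.mul_sum, Matrix.sum_mul, Matrix.mul_smul, Matrix.smul_mul,
      Finset.smul_sum]
    rw [Finset.sum_comm]
  intro l
  rw [comm k l C, h, lin l]
  apply Finset.sum_congr rfl
  intro i _
  rw [comm l i C]
end
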